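/- arXiv:1612.04071 — 2 statements merged into one kernel-verified Lean document; each statement's English description precedes it below -/
import Mathlib

section
/- For any positive integers k and r, ζ(k+1, 1,...,1) (with r-1 trailing ones) = ζ(r+1, 1,...,1) (with k-1 trailing ones). -/
/-!
For `m ≥ 1` the numbers `u n = 1 / C(m + n, n)` decrease to `0` and telescope:
`u n - u (n + 1) = m / ((n + 1) C(m + n + 1, n + 1))`. Iterating this `k` times gives
`1 / m^k = ∑_{0 < d₁ < ⋯ < d_k} 1 / (d₁ ⋯ d_k C(m + d_k, m))`.
Since `ζ(k + 1, {1}^{r - 1}) = ∑_{0 < m₁ < ⋯ < m_r} 1 / (m₁ ⋯ m_r m_r^k)`, substituting this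
expansion of `1 / m_r^k` writes the left side as a sum over pairs of chains whose summand is
symmetric under `(m, r) ↔ (d, k)`, because `C(m + d, m) = C(m + d, d)`. All sums are taken in
`ℝ≥0∞`, where rearrangements need no convergence argument.
-/

/-- The multiple zeta value `ζ(k₁,…,k_d) = ∑_{n₁>⋯>n_d≥1} 1/(n₁^{k₁}⋯n_d^{k_d})`. -/
noncomputable def mzv (k : List ℕ) : ℝ :=
  ∑' n : {f : Fin k.length → ℕ // (∀ i j : Fin k.length, i < j → f j < f i) ∧ ∀ i, 1 ≤ f i},
    ∏ i : Fin k.length, (1 : ℝ) / (n.1 i : ℝ) ^ (k.get i)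

open scoped ENNReal Topology
open Filter

theorem ENNReal.tsum_eq_of_eq_add_succ {u v : ℕ → ℝ≥0∞} (h : ∀ n, u n = v n + u (n + 1))
    (hu : Tendsto u atTop (𝓝 0)) : ∑' n, v n = u 0 := by
  have partial_sum : ∀ n, ∑ i ∈ Finset.range n, v i + u n = u 0 := by
    intro n
    induction n with
    | zero => simp
    | succ n ih => rw [Finset.sum_range_succ, add_assoc, ← h, ih]
  have hlim := (ENNReal.tendsto_nat_tsum v).add hu
  simp only [partial_sum, add_zero] at hlim
  exact tendsto_nhds_unique tendsto_const_nhds hlim |>.symm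

noncomputable def tailSum (φ : ℕ → ℝ≥0∞) (c : ℕ) : ℝ≥0∞ :=
  ∑' i : ℕ, ((c + 1 + i : ℕ) : ℝ≥0∞)⁻¹ * φ (c + 1 + i)

theorem tailSum_congr {φ ψ : ℕ → ℝ≥0∞} {c : ℕ} (h : ∀ d, c < d → φ d = ψ d) :
    tailSum φ c = tailSum ψ c :=
  tsum_congr fun i => by rw [h _ (by omega)]

theorem iterate_tailSum_succ_congr {φ ψ : ℕ → ℝ≥0∞} (t : ℕ) {c : ℕ}
    (h : ∀ d, c < d → φ d = ψ d) : tailSum^[t + 1] φ c = tailSum^[t + 1] ψ c := by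
  induction t generalizing c with
  | zero => exact tailSum_congr h
  | succ t ih =>
    rw [Function.iterate_succ_apply' _ (t + 1), Function.iterate_succ_apply' _ (t + 1)]
    exact tailSum_congr fun d hd => ih fun e he => h e (hd.trans he)

theorem tailSum_const_mul (x : ℝ≥0∞) (φ : ℕ → ℝ≥0∞) (c : ℕ) :
    tailSum (fun d => x * φ d) c = x * tailSum φ c := by
  simp only [tailSum, ← ENNReal.tsum_mul_left, mul_left_comm]

theorem iterate_tailSum_const_mul (x : ℝ≥0∞) (φ : ℕ → ℝ≥0∞) (t c : ℕ) :
    tailSum^[t] (fun d => x * φ d) c = x * tailSum^[t] φ c := by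
  induction t generalizing φ with
  | zero => rfl
  | succ t ih =>
    rw [Function.iterate_succ_apply, Function.iterate_succ_apply, ← ih]
    exact congrArg (tailSum^[t] · c) (funext (tailSum_const_mul x φ))

theorem tailSum_tsum (g : ℕ → ℕ → ℝ≥0∞) (c : ℕ) :
    tailSum (fun d => ∑' j, g j d) c = ∑' j, tailSum (g j) c := by
  simp only [tailSum, ← ENNReal.tsum_mul_left]
  exact ENNReal.tsum_comm

theorem iterate_tailSum_tsum (g : ℕ → ℕ → ℝ≥0∞) (t c : ℕ) :
    tailSum^[t] (fun d => ∑' j, g j d) c = ∑' j, tailSum^[t] (g j) c := by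
  induction t generalizing g with
  | zero => rfl
  | succ t ih =>
    rw [Function.iterate_succ_apply, funext (tailSum_tsum g), ih]
    rfl

theorem tailSum_iterate_tailSum_comm (ψ : ℕ → ℕ → ℝ≥0∞) (r b c : ℕ) :
    tailSum (fun a => tailSum^[r] (ψ a) c) b =
      tailSum^[r] (fun d => tailSum (fun a => ψ a d) b) c := by
  have h := iterate_tailSum_tsum (fun i d => ((b + 1 + i : ℕ) : ℝ≥0∞)⁻¹ * ψ (b + 1 + i) d) r c
  simp only [iterate_tailSum_const_mul] at h
  exact h.symm

theorem iterate_tailSum_comm (k r : ℕ) (ψ : ℕ → ℕ → ℝ≥0∞) (b c : ℕ) :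
    tailSum^[k] (fun a => tailSum^[r] (ψ a) c) b =
      tailSum^[r] (fun d => tailSum^[k] (fun a => ψ a d) b) c := by
  induction k generalizing ψ b with
  | zero => rfl
  | succ k ih =>
    rw [Function.iterate_succ_apply, funext fun b' => tailSum_iterate_tailSum_comm ψ r b' c, ih]
    rfl

abbrev StrictChain (t c : ℕ) : Type := {f : Fin t → ℕ // StrictAnti f ∧ ∀ i, c < f i}

theorem Fin.strictAnti_snoc {t d : ℕ} {g : Fin t → ℕ} (hg : StrictAnti g) (hd : ∀ i, d < g i) :
    StrictAnti (Fin.snoc g d : Fin (t + 1) → ℕ) := by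
  intro a b hab
  induction b using Fin.lastCases with
  | last =>
    induction a using Fin.lastCases with
    | last => exact absurd hab (lt_irrefl _)
    | cast a => simpa using hd a
  | cast b =>
    induction a using Fin.lastCases with
    | last => exact absurd hab (Fin.castSucc_lt_last b).asymm
    | cast a => simpa using hg (Fin.castSucc_lt_castSucc_iff.mp hab)

def StrictChain.peel (t c : ℕ) : StrictChain (t + 1) c ≃ Σ i : ℕ, StrictChain t (c + 1 + i) where
  toFun f := ⟨f.1 (Fin.last t) - (c + 1), Fin.init f.1,
    f.2.1.comp_strictMono Fin.strictMono_castSucc, fun i => by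
      have := f.2.1 (Fin.castSucc_lt_last i)
      have := f.2.2 (Fin.last t)
      simp only [Fin.init]
      omega⟩
  invFun p := ⟨Fin.snoc p.2.1 (c + 1 + p.1), Fin.strictAnti_snoc p.2.2.1 p.2.2.2,
    Fin.lastCases (by simp; omega) fun i => by have := p.2.2.2 i; simp; omega⟩
  left_inv f := by
    have := f.2.2 (Fin.last t)
    apply Subtype.ext
    simp [show c + 1 + (f.1 (Fin.last t) - (c + 1)) = f.1 (Fin.last t) by omega]
  right_inv := by
    rintro ⟨i, g⟩
    exact Sigma.subtype_ext (by simp) (by simp)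

@[simp]
theorem StrictChain.peel_symm_apply_coe (t c : ℕ) (p : Σ i : ℕ, StrictChain t (c + 1 + i)) :
    ((StrictChain.peel t c).symm p).1 = Fin.snoc p.2.1 (c + 1 + p.1) :=
  rfl

instance (c : ℕ) : Unique (StrictChain 0 c) where
  default := ⟨Fin.elim0, fun i => i.elim0, fun i => i.elim0⟩
  uniq _ := Subtype.ext (funext fun i => i.elim0)

theorem tsum_strictChain_eq_iterate_tailSum (φ : ℕ → ℝ≥0∞) (t c : ℕ) :
    ∑' n : StrictChain (t + 1) c, φ (n.1 0) * ∏ i, ((n.1 i : ℕ) : ℝ≥0∞)⁻¹ =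
      tailSum^[t + 1] φ c := by
  induction t generalizing c with
  | zero =>
    rw [← (StrictChain.peel 0 c).symm.tsum_eq, ENNReal.tsum_sigma']
    refine tsum_congr fun i => ?_
    simp [tsum_fintype, Fin.snoc_zero, mul_comm]
  | succ t ih =>
    rw [← (StrictChain.peel (t + 1) c).symm.tsum_eq, ENNReal.tsum_sigma',
      Function.iterate_succ_apply']
    refine tsum_congr fun i => ?_
    rw [← ih, ← ENNReal.tsum_mul_left]
    refine tsum_congr fun g => ?_
    rw [StrictChain.peel_symm_apply_coe, Fin.prod_univ_castSucc]
    simp only [Fin.snoc_apply_zero, Fin.snoc_castSucc, Fin.snoc_last]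
    ring

theorem mzv_eq_toReal_tsum (L : List ℕ) :
    mzv L = (∑' n : StrictChain L.length 0, ∏ i, (((n.1 i : ℕ) : ℝ≥0∞) ^ L.get i)⁻¹).toReal := by
  have hfin (n : StrictChain L.length 0) (i : Fin L.length) :
      (((n.1 i : ℕ) : ℝ≥0∞) ^ L.get i)⁻¹ ≠ ∞ := by
    simp [(n.2.2 i).ne']
  rw [ENNReal.tsum_toReal_eq fun n => ENNReal.prod_ne_top fun i _ => hfin n i]
  refine tsum_congr fun n => ?_
  simp [ENNReal.toReal_prod]

theorem mzv_cons_eq_toReal_iterate_tailSum (s : ℕ) {l : List ℕ} (hl : ∀ x ∈ l, x = 1) :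
    mzv ((s + 1) :: l) = (tailSum^[l.length + 1] (fun m => ((m : ℝ≥0∞) ^ s)⁻¹) 0).toReal := by
  rw [mzv_eq_toReal_tsum, ← tsum_strictChain_eq_iterate_tailSum]
  congr 1
  refine tsum_congr fun n => ?_
  have hget (i : Fin l.length) : ((s + 1) :: l).get i.succ = 1 := hl _ (List.get_mem l i)
  refine (Fin.prod_univ_succ (n := l.length) _).trans ?_
  rw [Fin.prod_univ_succ]
  simp only [hget, pow_one]
  rw [List.get_cons_zero, pow_succ,
    ENNReal.mul_inv (Or.inr (ENNReal.natCast_ne_top _)) (Or.inl (by simp)), mul_assoc]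

theorem inv_choose_eq_add (m n : ℕ) :
    (((m + n).choose n : ℕ) : ℝ≥0∞)⁻¹ =
      m * (((n + 1 : ℕ) : ℝ≥0∞)⁻¹ * (((m + (n + 1)).choose (n + 1) : ℕ) : ℝ≥0∞)⁻¹) +
        (((m + (n + 1)).choose (n + 1) : ℕ) : ℝ≥0∞)⁻¹ := by
  have hrec : (n + 1) * (m + (n + 1)).choose (n + 1) = (m + n + 1) * (m + n).choose n := by
    rw [Nat.add_one_mul_choose_eq, ← add_assoc, mul_comm]
  have hC : 0 < (m + n).choose n := Nat.choose_pos (by omega)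
  have hN : 0 < (m + (n + 1)).choose (n + 1) := Nat.choose_pos (by omega)
  have hinv : ∀ k : ℕ, 0 < k → ((k : ℝ≥0∞))⁻¹ = ENNReal.ofReal (k : ℝ)⁻¹ := fun k hk => by
    rw [ENNReal.ofReal_inv_of_pos (by positivity), ENNReal.ofReal_natCast]
  rw [hinv _ hC, hinv _ hN, hinv _ n.succ_pos, ← ENNReal.ofReal_natCast m,
    ← ENNReal.ofReal_mul (by positivity), ← ENNReal.ofReal_mul (by positivity),
    ← ENNReal.ofReal_add (by positivity) (by positivity)]
  congr 1
  have hrecR := congrArg (Nat.cast : ℕ → ℝ) hrec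
  field_simp
  push_cast at hrecR ⊢
  linear_combination hrecR

theorem tendsto_inv_choose {m : ℕ} (hm : 1 ≤ m) :
    Tendsto (fun n => (((m + n).choose n : ℕ) : ℝ≥0∞)⁻¹) atTop (𝓝 0) := by
  have hbound : ∀ n, (((m + n).choose n : ℕ) : ℝ≥0∞)⁻¹ ≤ ((n + 1 : ℕ) : ℝ≥0∞)⁻¹ := fun n => by
    have : n + 1 ≤ (m + n).choose n :=
      (Nat.choose_succ_self_right n).symm.le.trans (Nat.choose_le_choose n (by omega))
    exact ENNReal.inv_le_inv.mpr (by exact_mod_cast this)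
  exact tendsto_of_tendsto_of_tendsto_of_le_of_le tendsto_const_nhds
    (ENNReal.tendsto_inv_nat_nhds_zero.comp (tendsto_add_atTop_nat 1)) (fun _ => zero_le) hbound

theorem tailSum_inv_choose {m : ℕ} (hm : 1 ≤ m) (c : ℕ) :
    tailSum (fun d => (((m + d).choose d : ℕ) : ℝ≥0∞)⁻¹) c =
      (m : ℝ≥0∞)⁻¹ * (((m + c).choose c : ℕ) : ℝ≥0∞)⁻¹ := by
  have htel : m * tailSum (fun d => (((m + d).choose d : ℕ) : ℝ≥0∞)⁻¹) c =
      (((m + c).choose c : ℕ) : ℝ≥0∞)⁻¹ := by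
    rw [tailSum, ← ENNReal.tsum_mul_left]
    refine ENNReal.tsum_eq_of_eq_add_succ
      (u := fun n => (((m + (c + n)).choose (c + n) : ℕ) : ℝ≥0∞)⁻¹) (fun n => ?_)
      ((tendsto_inv_choose hm).comp (tendsto_add_atTop_nat c |>.congr fun n => add_comm n c))
    simpa only [← add_assoc, add_right_comm c 1 n] using inv_choose_eq_add m (c + n)
  have hm0 : (m : ℝ≥0∞) ≠ 0 := by exact_mod_cast (by omega : m ≠ 0)
  rw [← htel, ← mul_assoc, ENNReal.inv_mul_cancel hm0 (ENNReal.natCast_ne_top m), one_mul]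

theorem iterate_tailSum_inv_choose {m : ℕ} (hm : 1 ≤ m) (t c : ℕ) :
    tailSum^[t] (fun d => (((m + d).choose d : ℕ) : ℝ≥0∞)⁻¹) c =
      ((m : ℝ≥0∞) ^ t)⁻¹ * (((m + c).choose c : ℕ) : ℝ≥0∞)⁻¹ := by
  induction t generalizing c with
  | zero => simp
  | succ t ih =>
    rw [Function.iterate_succ_apply', funext ih, tailSum_const_mul, tailSum_inv_choose hm,
      ← mul_assoc, pow_succ, ENNReal.mul_inv (by simp) (by simp)]

theorem inv_pow_eq_iterate_tailSum_inv_choose {m : ℕ} (hm : 1 ≤ m) (k : ℕ) :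
    ((m : ℝ≥0∞) ^ k)⁻¹ = tailSum^[k] (fun d => (((m + d).choose d : ℕ) : ℝ≥0∞)⁻¹) 0 := by
  simp [iterate_tailSum_inv_choose hm]

theorem iterate_tailSum_inv_pow_comm {k r : ℕ} (hk : 1 ≤ k) (hr : 1 ≤ r) :
    tailSum^[r] (fun m => ((m : ℝ≥0∞) ^ k)⁻¹) 0 = tailSum^[k] (fun d => ((d : ℝ≥0∞) ^ r)⁻¹) 0 := by
  have expand {k r : ℕ} (hr : 1 ≤ r) : tailSum^[r] (fun m => ((m : ℝ≥0∞) ^ k)⁻¹) 0 =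
      tailSum^[r] (fun m => tailSum^[k] (fun d => (((m + d).choose d : ℕ) : ℝ≥0∞)⁻¹) 0) 0 := by
    obtain ⟨r, rfl⟩ : ∃ r', r = r' + 1 := ⟨r - 1, by omega⟩
    exact iterate_tailSum_succ_congr r fun m hm => inv_pow_eq_iterate_tailSum_inv_choose hm k
  rw [expand hr, expand hk, iterate_tailSum_comm]
  refine congrArg (tailSum^[k] · 0)
    (funext fun d => congrArg (tailSum^[r] · 0) (funext fun m => ?_))
  rw [add_comm, Nat.choose_symm_add]

/-- Height-one duality: `ζ(k+1,1,…,1) = ζ(r+1,1,…,1)` (with `r-1`, resp. `k-1`, ones). -/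
theorem stmt_3 (k r : ℕ) (hk : 1 ≤ k) (hr : 1 ≤ r) :
    mzv ((k + 1) :: List.replicate (r - 1) 1) = mzv ((r + 1) :: List.replicate (k - 1) 1) := by
  have hones (n : ℕ) : ∀ x ∈ List.replicate n 1, x = 1 := fun _ => List.eq_of_mem_replicate
  rw [mzv_cons_eq_toReal_iterate_tailSum k (hones _), mzv_cons_eq_toReal_iterate_tailSum r (hones _),
    List.length_replicate, List.length_replicate, Nat.sub_add_cancel hr, Nat.sub_add_cancel hk,
    iterate_tailSum_inv_pow_comm hk hr]
end

section
/- In ℚ⟨⟨x,y⟩⟩, let σ be the automorphism with σ(x) = x, σ(y) = (1−x)⁻¹y, let τ be the continuous anti-automorphism exchanging x and y, and let α be the endomorphism with α(x) = x − xy, α(y) = −xy. Then for positive integers k₁,...,k_d, τστ(α(x^{k₁−1}y ⋯ x^{k_d−1}y)) = (−1)^d x^{k₁}(1−y)⁻¹y ⋯ x^{k_d}(1−y)⁻¹y. -/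
/-! Composing the two anti-automorphisms `τ` with `σ` and `α` gives a multiplicative map, so it
suffices to evaluate it on one letter `x^(n-1) y`. There `τ(α(x^(n-1) y)) = -xy (y - xy)^(n-1)`,
and `σ` sends `y - xy = (1 - x) y` to `(1 - x)(1 - x)⁻¹ y = y`; applying `τ` once more yields
`-x^n (1 - y)⁻¹ y`, and the signs collect into `(-1)^d`. -/

section AntiHom

variable {R : Type*} [Ring R] (τ : R → R)

theorem map_neg_of_add (hτ_add : ∀ a b, τ (a + b) = τ a + τ b) (a : R) : τ (-a) = -τ a :=
  map_neg (AddMonoidHom.mk' τ hτ_add) a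

theorem map_sub_of_add (hτ_add : ∀ a b, τ (a + b) = τ a + τ b) (a b : R) :
    τ (a - b) = τ a - τ b :=
  map_sub (AddMonoidHom.mk' τ hτ_add) a b

theorem map_pow_of_anti (hτ_mul : ∀ a b, τ (a * b) = τ b * τ a) (hτ_one : τ 1 = 1)
    (a : R) (n : ℕ) : τ (a ^ n) = τ a ^ n := by
  induction n with
  | zero => rw [pow_zero, pow_zero, hτ_one]
  | succ n ih => rw [pow_succ, hτ_mul, ih, pow_succ']

def MonoidHom.conjAnti (hτ_mul : ∀ a b, τ (a * b) = τ b * τ a) (hτ_one : τ 1 = 1)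
    (f : R →* R) : R →* R where
  toFun a := τ (f (τ a))
  map_one' := by rw [hτ_one, map_one, hτ_one]
  map_mul' a b := by rw [hτ_mul, map_mul, hτ_mul]

end AntiHom

section Letter

variable {R : Type*} [Ring R] {F : Type*} [FunLike F R R] [RingHomClass F R R]

theorem map_y_sub_x_mul_y {x y u : R} (hu : (1 - x) * u = 1) {σ : F} (hσx : σ x = x)
    (hσy : σ y = u * y) : σ (y - x * y) = y := by
  rw [← one_sub_mul, map_mul, map_sub, map_one, hσx, hσy, ← mul_assoc, hu, one_mul]

theorem anti_conj_map_letter {x y u v : R} (hu : (1 - x) * u = 1) {σ α : F}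
    (hσx : σ x = x) (hσy : σ y = u * y) (hαx : α x = x - x * y) (hαy : α y = -(x * y))
    (τ : R → R) (hτ_add : ∀ a b, τ (a + b) = τ a + τ b)
    (hτ_mul : ∀ a b, τ (a * b) = τ b * τ a) (hτ_one : τ 1 = 1)
    (hτx : τ x = y) (hτy : τ y = x) (hτu : τ u = v) (m : ℕ) :
    τ (σ (τ (α (x ^ m * y)))) = -(x ^ (m + 1) * (v * y)) := by
  have hτ_pow := map_pow_of_anti τ hτ_mul hτ_one
  have hτxy : τ (x * y) = x * y := by rw [hτ_mul, hτx, hτy]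
  have hτα : τ (α (x ^ m * y)) = -(x * y) * (y - x * y) ^ m := by
    rw [map_mul, map_pow, hαx, hαy, hτ_mul, map_neg_of_add τ hτ_add, hτxy, hτ_pow,
      map_sub_of_add τ hτ_add, hτx, hτxy]
  rw [hτα, map_mul, map_pow, map_y_sub_x_mul_y hu hσx hσy, map_neg, map_mul, hσx, hσy,
    hτ_mul, hτ_pow, hτy, map_neg_of_add τ hτ_add, hτ_mul, hτ_mul, hτx, hτy, hτu]
  noncomm_ring

end Letter

theorem stmt_12_general (R : Type*) [Ring R] [Algebra ℚ R] (x y u v : R)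
    (hu2 : (1 - x) * u = 1)
    (σ α : R →ₐ[ℚ] R) (hσx : σ x = x) (hσy : σ y = u * y)
    (hαx : α x = x - x * y) (hαy : α y = -(x * y))
    (τ : R → R) (hτ_add : ∀ a b, τ (a + b) = τ a + τ b)
    (hτ_mul : ∀ a b, τ (a * b) = τ b * τ a) (hτ_one : τ 1 = 1)
    (hτx : τ x = y) (hτy : τ y = x) (hτu : τ u = v)
    (d : ℕ) (k : Fin d → ℕ) (hk : ∀ i, 1 ≤ k i) :
    τ (σ (τ (α (List.ofFn fun i => x ^ (k i - 1) * y).prod))) =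
      (-1 : R) ^ d * (List.ofFn fun i => x ^ (k i) * (v * y)).prod := by
  let G : R →* R := (MonoidHom.conjAnti τ hτ_mul hτ_one (σ : R →* R)).comp (α : R →* R)
  have hG : ∀ i, G (x ^ (k i - 1) * y) = -(x ^ k i * (v * y)) := fun i => by
    obtain ⟨m, hm⟩ := Nat.exists_eq_add_of_le' (hk i)
    rw [hm, Nat.add_sub_cancel]
    exact anti_conj_map_letter hu2 hσx hσy hαx hαy τ hτ_add hτ_mul hτ_one hτx hτy hτu m
  change G _ = _
  rw [map_list_prod, List.map_ofFn, Function.comp_def]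
  simp only [hG]
  rw [← Function.comp_def Neg.neg, ← List.map_ofFn, List.prod_map_neg, List.length_ofFn]

/-- In `ℚ⟨⟨x,y⟩⟩` (modelled by any `ℚ`-algebra containing `x, y` with `1 - x` and
`1 - y` invertible, with inverses `u` and `v`), let `σ` be the algebra map with
`σ(x) = x`, `σ(y) = (1-x)⁻¹y`, let `τ` be the anti-automorphism exchanging `x` and
`y`, and let `α` be the algebra map with `α(x) = x - xy`, `α(y) = -xy`. Then for
positive integers `k₁, …, k_d`:
`τστ(α(x^{k₁-1}y ⋯ x^{k_d-1}y)) = (-1)^d x^{k₁}(1-y)⁻¹y ⋯ x^{k_d}(1-y)⁻¹y`. -/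
theorem stmt_12 (R : Type*) [Ring R] [Algebra ℚ R] (x y u v : R)
    (hu1 : u * (1 - x) = 1) (hu2 : (1 - x) * u = 1)
    (hv1 : v * (1 - y) = 1) (hv2 : (1 - y) * v = 1)
    (σ α : R →ₐ[ℚ] R) (hσx : σ x = x) (hσy : σ y = u * y)
    (hαx : α x = x - x * y) (hαy : α y = -(x * y))
    (τ : R → R) (hτ_add : ∀ a b, τ (a + b) = τ a + τ b)
    (hτ_mul : ∀ a b, τ (a * b) = τ b * τ a) (hτ_one : τ 1 = 1)
    (hτ_smul : ∀ (q : ℚ) (a : R), τ (q • a) = q • τ a)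
    (hτx : τ x = y) (hτy : τ y = x) (hτu : τ u = v)
    (d : ℕ) (hd : 1 ≤ d) (k : Fin d → ℕ) (hk : ∀ i, 1 ≤ k i) :
    τ (σ (τ (α (List.ofFn fun i => x ^ (k i - 1) * y).prod))) =
      (-1 : R) ^ d * (List.ofFn fun i => x ^ (k i) * (v * y)).prod :=
  stmt_12_general R x y u v hu2 σ α hσx hσy hαx hαy τ hτ_add hτ_mul hτ_one hτx hτy hτu d k hk
end
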